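/- Let k be a field, d ≥ 1, and σ ⊆ ℝ^d a strongly convex rational polyhedral cone spanning ℝ^d. Let R = k[σ ∩ ℤ^d] be the monoid algebra, J its maximal monomial ideal, and I = (X^{m_1}, …, X^{m_s}) the ideal generated by monomials with m_1, …, m_s ∈ σ ∩ ℤ^d. Set W = ⋃_{i=1}^s (m_i + σ) ⊆ ℝ^d. Then for every m ∈ σ ∩ ℤ^d: X^m belongs to ⋃_{t≥0} (I : J^t) if and only if (m + σ) \ W has finite Lebesgue measure. -/

import Mathlib

/-!
On monomials the question is combinatorial. `J^t` is spanned by the monomials `X^u` with `u` a sum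
of `t` nonzero lattice points of `σ`, and `X^v ∈ I` iff `v ∈ W`; so `X^w` lies in the saturation
iff for some `t` all these `w + u` lie in `W`.

If they do, `(w + σ) \ W` is bounded: rounding down the coefficients of a point of `σ` writes it
as a sum of generators of `σ` plus a bounded remainder, and a point far out uses at least `t`
generators. If they do not, there are such lattice points `w + u ∉ W` for every `t`. A linear
functional that dominates the norm on the salient cone `σ` shows that they escape to infinity.
Lattice points outside a rational cone keep a uniform distance `δ` from it, so every translate
`w + u + (σ ∩ B(0, δ))` misses `W`; as `σ` spans `ℝ^d` these translates have a fixed positive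
volume, and `(w + σ) \ W` has infinite volume.
-/

open Pointwise MeasureTheory

universe u

/-- The inclusion `ℤ^d → ℝ^d`. -/
def intToReal {d : ℕ} (u : Fin d → ℤ) : Fin d → ℝ := fun i => (u i : ℝ)

/-- `σ ⊆ ℝ^d` is a strongly convex rational polyhedral cone: it is the set of nonnegative
real combinations of finitely many vectors of `ℤ^d`, and `σ ∩ (-σ) = {0}`. -/
def IsStronglyConvexRationalPolyhedralCone {d : ℕ} (σ : Set (Fin d → ℝ)) : Prop :=
  (∃ s : Finset (Fin d → ℤ), σ = {x | ∃ c : (Fin d → ℤ) → ℝ, (∀ v, 0 ≤ c v) ∧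
      x = ∑ v ∈ s, c v • intToReal v}) ∧ σ ∩ (-σ) = {0}

/-- The saturation `⋃_t (I : J^t)` of `I` with respect to `J`. -/
noncomputable def saturation {R : Type u} [CommRing R] (I J : Ideal R) : Ideal R :=
  ⨆ t : ℕ, Submodule.colon I (J ^ t)

open Metric Filter Topology

section ConicHull

variable {ι E : Type*}

section Module

variable [AddCommGroup E] [Module ℝ E] {s t : Finset ι} {g : ι → E} {x : E}

def conicHull (s : Finset ι) (g : ι → E) : PointedCone ℝ E where
  carrier := {x | ∃ c : ι → ℝ, (∀ i, 0 ≤ c i) ∧ x = ∑ i ∈ s, c i • g i}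
  add_mem' := by
    rintro _ _ ⟨c, hc, rfl⟩ ⟨c', hc', rfl⟩
    exact ⟨c + c', fun i => add_nonneg (hc i) (hc' i), by simp [add_smul, Finset.sum_add_distrib]⟩
  zero_mem' := ⟨0, fun _ => le_rfl, by simp⟩
  smul_mem' := by
    rintro a _ ⟨c, hc, rfl⟩
    exact ⟨fun i => a * c i, fun i => mul_nonneg a.2 (hc i),
      by simp [Finset.smul_sum, mul_smul]⟩

theorem apply_mem_conicHull [DecidableEq ι] {i : ι} (hi : i ∈ s) : g i ∈ conicHull s g :=
  ⟨Pi.single i 1, fun j => by by_cases h : j = i <;> simp [h], by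
    simp [Pi.single_apply, ite_smul, hi]⟩

theorem conicHull_mono (hts : t ⊆ s) : conicHull t g ≤ conicHull s g := by
  classical
  rintro _ ⟨c, hc, rfl⟩
  refine ⟨fun i => if i ∈ t then c i else 0, fun i => by dsimp only; split_ifs <;> simp [hc], ?_⟩
  rw [← Finset.sum_subset hts fun i _ hi => by simp [hi]]
  exact Finset.sum_congr rfl fun i hi => by simp [hi]

theorem conicHull_filter_ne_zero [DecidablePred fun i => g i ≠ 0] :
    conicHull (s.filter fun i => g i ≠ 0) g = conicHull s g := by
  refine le_antisymm (conicHull_mono (Finset.filter_subset _ _)) ?_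
  rintro _ ⟨c, hc, rfl⟩
  refine ⟨c, hc, (Finset.sum_filter_of_ne fun i _ hi => ?_).symm⟩
  rintro h
  simp [h] at hi

/-- Push `x` along the linear relation `b` until one of its coefficients vanishes. -/
theorem exists_mem_conicHull_erase [DecidableEq ι] {b : ι → ℝ} (hb : ∑ i ∈ s, b i • g i = 0)
    {j : ι} (hj : j ∈ s) (hbj : 0 < b j) (hx : x ∈ conicHull s g) :
    ∃ i ∈ s, x ∈ conicHull (s.erase i) g := by
  obtain ⟨c, hc, rfl⟩ := hx
  set P := s.filter fun i => 0 < b i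
  obtain ⟨i₀, hi₀P, hmin⟩ := P.exists_min_image (fun i => c i / b i) ⟨j, by simp [P, hj, hbj]⟩
  obtain ⟨hi₀, hbi₀⟩ := Finset.mem_filter.mp hi₀P
  set τ := c i₀ / b i₀
  have hτ : 0 ≤ τ := div_nonneg (hc i₀) hbi₀.le
  refine ⟨i₀, hi₀, fun i => if i ∈ s then c i - τ * b i else 0, fun i => ?_, ?_⟩
  · dsimp only
    split_ifs with his
    · rcases le_or_gt (b i) 0 with hbi | hbi
      · nlinarith [hc i]
      · linarith [(le_div_iff₀ hbi).mp (hmin i (Finset.mem_filter.mpr ⟨his, hbi⟩))]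
    · exact le_rfl
  · rw [Finset.sum_erase _ (by simp [hi₀, τ, div_mul_cancel₀ _ hbi₀.ne'])]
    calc ∑ i ∈ s, c i • g i = ∑ i ∈ s, c i • g i - τ • ∑ i ∈ s, b i • g i := by
          rw [hb, smul_zero, sub_zero]
      _ = _ := by
          rw [Finset.smul_sum, ← Finset.sum_sub_distrib]
          exact Finset.sum_congr rfl fun i hi => by simp [hi, sub_smul, mul_smul]

/-- Carathéodory's theorem for finitely generated cones. -/
theorem exists_linearIndepOn_of_mem_conicHull (hx : x ∈ conicHull s g) :
    ∃ t ⊆ s, LinearIndepOn ℝ g t ∧ x ∈ conicHull t g := by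
  classical
  induction s using Finset.strongInduction with
  | H s ih =>
  by_cases hli : LinearIndepOn ℝ g s
  · exact ⟨s, subset_rfl, hli, hx⟩
  obtain ⟨a, ha, j, hj, haj⟩ := not_linearIndepOn_finset_iff.mp hli
  obtain ⟨i₀, hi₀, hx'⟩ : ∃ i ∈ s, x ∈ conicHull (s.erase i) g := by
    rcases haj.lt_or_gt with haj | haj
    · refine exists_mem_conicHull_erase (b := -a) ?_ hj (neg_pos.mpr haj) hx
      simp [neg_smul, ha]
    · exact exists_mem_conicHull_erase ha hj haj hx
  obtain ⟨t, hts, hli, hxt⟩ := ih _ (Finset.erase_ssubset hi₀) hx'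
  exact ⟨t, hts.trans (Finset.erase_subset _ _), hli, hxt⟩

theorem coe_conicHull_eq_image :
    (conicHull s g : Set E) =
      Fintype.linearCombination ℝ (fun i : s => g i) '' {c | ∀ i, 0 ≤ c i} := by
  ext x
  constructor
  · rintro ⟨c, hc, rfl⟩
    exact ⟨fun i => c i, fun i => hc i, by
      rw [Fintype.linearCombination_apply]; exact Finset.sum_coe_sort s fun i => c i • g i⟩
  · rintro ⟨c, hc, rfl⟩
    classical
    refine ⟨fun i => if h : i ∈ s then c ⟨i, h⟩ else 0, fun i => ?_, ?_⟩
    · dsimp only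
      split_ifs
      exacts [hc _, le_rfl]
    · rw [Fintype.linearCombination_apply, ← Finset.sum_coe_sort s]
      simp

end Module

section Topology

variable [AddCommGroup E] [Module ℝ E] [TopologicalSpace E] [IsTopologicalAddGroup E]
  [ContinuousSMul ℝ E] [T2Space E] {s : Finset ι} {g : ι → E}

theorem isClosed_conicHull_of_linearIndepOn (h : LinearIndepOn ℝ g s) :
    IsClosed (conicHull s g : Set E) := by
  have hinj := LinearIndependent.fintypeLinearCombination_injective h
  rw [coe_conicHull_eq_image]
  refine (LinearMap.isClosedEmbedding_of_injective (LinearMap.ker_eq_bot.mpr hinj)).isClosedMap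
    _ ?_
  simp only [Set.ofPred_forall]
  exact isClosed_iInter fun i => isClosed_le continuous_const (continuous_apply i)

theorem isClosed_conicHull : IsClosed (conicHull s g : Set E) := by
  classical
  have : (conicHull s g : Set E) =
      ⋃ (t : Finset ι) (_ : t ∈ s.powerset.filter fun t : Finset ι => LinearIndepOn ℝ g ↑t),
        (conicHull t g : Set E) := by
    ext x
    simp only [Set.mem_iUnion, Finset.mem_filter, Finset.mem_powerset, exists_prop]
    refine ⟨fun hx => ?_, fun ⟨t, ⟨hts, _⟩, hxt⟩ => conicHull_mono hts hxt⟩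
    obtain ⟨t, hts, hli, hxt⟩ := exists_linearIndepOn_of_mem_conicHull hx
    exact ⟨t, ⟨hts, hli⟩, hxt⟩
  rw [this]
  exact isClosed_biUnion_finset fun t ht => isClosed_conicHull_of_linearIndepOn
    (Finset.mem_filter.mp ht).2

end Topology

section Normed

variable [NormedAddCommGroup E] [NormedSpace ℝ E] {s : Finset ι} {g : ι → E} {x : E}

/-- `n i` is the integer part of the `i`-th coefficient of `x`. -/
theorem exists_sub_sum_nsmul_mem_conicHull (hx : x ∈ conicHull s g) :
    ∃ n : ι → ℕ, x - ∑ i ∈ s, n i • g i ∈ conicHull s g ∧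
      ‖x - ∑ i ∈ s, n i • g i‖ ≤ ∑ i ∈ s, ‖g i‖ := by
  obtain ⟨c, hc, rfl⟩ := hx
  have hfract : ∀ i, 0 ≤ c i - ⌊c i⌋₊ := fun i => sub_nonneg.mpr (Nat.floor_le (hc i))
  have hrem : ∑ i ∈ s, c i • g i - ∑ i ∈ s, ⌊c i⌋₊ • g i = ∑ i ∈ s, (c i - ⌊c i⌋₊) • g i := by
    simp [sub_smul, Finset.sum_sub_distrib, Nat.cast_smul_eq_nsmul]
  refine ⟨fun i => ⌊c i⌋₊, ⟨_, hfract, hrem⟩, ?_⟩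
  rw [hrem]
  refine (norm_sum_le _ _).trans (Finset.sum_le_sum fun i _ => ?_)
  rw [norm_smul, Real.norm_of_nonneg (hfract i)]
  exact mul_le_of_le_one_left (norm_nonneg _) (by linarith [Nat.lt_floor_add_one (c i)])

/-- Separate `0` from the convex hull of the generators. -/
theorem exists_norm_le_of_salient (hg : ∀ i ∈ s, g i ≠ 0)
    (hsal : (conicHull s g : ConvexCone ℝ E).Salient) :
    ∃ f : E →L[ℝ] ℝ, ∀ x ∈ conicHull s g, ‖x‖ ≤ f x := by
  classical
  have h0 : (0 : E) ∉ convexHull ℝ ((s.image g : Finset E) : Set E) := by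
    rw [Finset.mem_convexHull']
    rintro ⟨w, hw0, hw1, hw⟩
    obtain ⟨y, hy, hwy⟩ : ∃ y ∈ s.image g, 0 < w y := by
      by_contra! h
      rw [Finset.sum_eq_zero fun y hy => le_antisymm (h y hy) (hw0 y hy)] at hw1
      exact zero_ne_one hw1
    obtain ⟨j, hj, rfl⟩ := Finset.mem_image.mp hy
    have hmem : ∀ y ∈ s.image g, w y • y ∈ conicHull s g := fun y hy => by
      obtain ⟨i, hi, rfl⟩ := Finset.mem_image.mp hy
      exact (conicHull s g).smul_mem (hw0 _ hy) (apply_mem_conicHull hi)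
    refine hsal _ (hmem _ hy) (smul_ne_zero hwy.ne' (hg j hj)) ?_
    rw [← Finset.sum_erase_add _ _ hy, add_eq_zero_iff_neg_eq] at hw
    rw [← hw, neg_neg]
    exact Submodule.sum_mem _ fun y hy' => hmem y (Finset.mem_of_mem_erase hy')
  obtain ⟨f, u, hfu, hu⟩ := geometric_hahn_banach_point_closed (convex_convexHull ℝ _)
    ((s.image g).finite_toSet.isClosed_convexHull ℝ) h0
  have hu0 : 0 < u := by simpa using hfu
  have hfg : ∀ i ∈ s, u ≤ f (g i) := fun i hi =>
    (hu _ (subset_convexHull ℝ _ (Finset.mem_coe.mpr (Finset.mem_image_of_mem g hi)))).le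
  set M := ∑ i ∈ s, ‖g i‖
  refine ⟨(M / u) • f, ?_⟩
  rintro _ ⟨c, hc, rfl⟩
  have hM : 0 ≤ M / u := div_nonneg (Finset.sum_nonneg fun _ _ => norm_nonneg _) hu0.le
  calc ‖∑ i ∈ s, c i • g i‖ ≤ ∑ i ∈ s, c i * M := by
        refine (norm_sum_le _ _).trans (Finset.sum_le_sum fun i hi => ?_)
        rw [norm_smul, Real.norm_of_nonneg (hc i)]
        exact mul_le_mul_of_nonneg_left
          (Finset.single_le_sum (fun j _ => norm_nonneg (g j)) hi) (hc i)
    _ = M / u * ∑ i ∈ s, c i * u := by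
        rw [Finset.mul_sum]
        exact Finset.sum_congr rfl fun i _ => by field_simp
    _ ≤ M / u * ∑ i ∈ s, c i * f (g i) := by
        gcongr with i hi
        exacts [hc i, hfg i hi]
    _ = ((M / u) • f) (∑ i ∈ s, c i • g i) := by simp [Finset.mul_sum, mul_left_comm]

end Normed

end ConicHull

section Measure

variable {E : Type*} [NormedAddCommGroup E] [MeasurableSpace E]

theorem measure_cone_inter_ball_pos [NormedSpace ℝ E] [FiniteDimensional ℝ E] (μ : Measure E)
    [μ.IsOpenPosMeasure] (C : PointedCone ℝ E) (hC : Submodule.span ℝ (C : Set E) = ⊤) {δ : ℝ}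
    (hδ : 0 < δ) :
    0 < μ (C ∩ ball 0 δ) := by
  have hzero : (0 : E) ∈ (C : Set E) := C.zero_mem
  obtain ⟨e, he⟩ : (interior (C : Set E)).Nonempty := by
    rw [C.convex.interior_nonempty_iff_affineSpan_eq_top,
      AffineSubspace.affineSpan_eq_top_iff_vectorSpan_eq_top_of_nonempty ℝ _ _ ⟨0, hzero⟩,
      vectorSpan_eq_span_vsub_set_right ℝ hzero]
    simpa using hC
  set a := δ / (‖e‖ + δ)
  have ha : 0 < a := by positivity
  have ha1 : a ≤ 1 := (div_le_one (by positivity)).mpr (by linarith [norm_nonneg e])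
  have hae : a • e ∈ interior (C : Set E) := by
    simpa using C.convex.combo_interior_closure_mem_interior he (subset_closure hzero) ha
      (sub_nonneg.mpr ha1) (add_sub_cancel a 1)
  have hae' : a • e ∈ ball (0 : E) δ := by
    rw [mem_ball_zero_iff, norm_smul, Real.norm_of_nonneg ha.le, div_mul_eq_mul_div,
      div_lt_iff₀ (by positivity)]
    nlinarith [norm_nonneg e]
  calc 0 < μ (interior (C : Set E) ∩ ball 0 δ) :=
        (isOpen_interior.inter isOpen_ball).measure_pos μ ⟨_, hae, hae'⟩
    _ ≤ μ (C ∩ ball 0 δ) := measure_mono (Set.inter_subset_inter_left _ interior_subset)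

/-- Chosen far enough apart, the translates are disjoint. -/
theorem measure_eq_top_of_forall_vadd_subset [BorelSpace E] (μ : Measure E) [μ.IsAddLeftInvariant]
    {K S : Set E} (hK : MeasurableSet K) (hKpos : μ K ≠ 0) {ρ : ℝ} (hKρ : K ⊆ ball 0 ρ)
    (hS : ∀ R : ℝ, ∃ y : E, R ≤ ‖y‖ ∧ y +ᵥ K ⊆ S) : μ S = ⊤ := by
  choose F hFnorm hFS using hS
  obtain ⟨k, hk⟩ := nonempty_of_measure_ne_zero hKpos
  have hρ : 0 < ρ := (norm_nonneg k).trans_lt (mem_ball_zero_iff.mp (hKρ hk))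
  let y : ℕ → E := fun n => Nat.rec (F 0) (fun _ z => F (‖z‖ + 2 * ρ)) n
  have hstep : ∀ n, ‖y n‖ + 2 * ρ ≤ ‖y (n + 1)‖ := fun n => hFnorm _
  have hsep : ∀ m n, m < n → ‖y m‖ + 2 * ρ ≤ ‖y n‖ := by
    intro m n hmn
    induction n, hmn using Nat.le_induction with
    | base => exact hstep m
    | succ n _ ih => linarith [hstep n]
  have hdisj : Pairwise (Function.onFun Disjoint fun n => y n +ᵥ K) := by
    refine (pairwise_disjoint_on _).mpr fun m n hmn => Set.disjoint_left.mpr ?_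
    rintro _ ⟨a, ha, rfl⟩ ⟨b, hb, hab⟩
    have hyn : y n = y m + a - b := by
      simp only [vadd_eq_add] at hab
      rw [← hab, add_sub_cancel_right]
    have : ‖y n‖ ≤ ‖y m‖ + ‖a‖ + ‖b‖ :=
      hyn ▸ (norm_sub_le _ _).trans (by gcongr; exact norm_add_le _ _)
    linarith [hsep m n hmn, mem_ball_zero_iff.mp (hKρ ha), mem_ball_zero_iff.mp (hKρ hb)]
  have hyS : ∀ n, y n +ᵥ K ⊆ S := by
    intro n
    cases n <;> exact hFS _
  refine top_unique ?_
  calc ⊤ = ∑' _ : ℕ, μ K := (ENNReal.tsum_const_eq_top_of_ne_zero hKpos).symm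
    _ = μ (⋃ n, y n +ᵥ K) := by
        rw [measure_iUnion hdisj fun n => hK.const_vadd _]
        simp [measure_vadd]
    _ ≤ μ S := measure_mono (Set.iUnion_subset hyS)

end Measure

section Lattice

variable {d : ℕ}

def intToRealHom : (Fin d → ℤ) →+ (Fin d → ℝ) := (Int.castAddHom ℝ).compLeft (Fin d)

theorem intToReal_zero : intToReal (0 : Fin d → ℤ) = 0 :=
  map_zero intToRealHom

theorem intToReal_add (u v : Fin d → ℤ) : intToReal (u + v) = intToReal u + intToReal v :=
  map_add intToRealHom u v

theorem intToReal_sub (u v : Fin d → ℤ) : intToReal (u - v) = intToReal u - intToReal v :=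
  map_sub intToRealHom u v

theorem intToReal_sum_nsmul {ι : Type*} (s : Finset ι) (n : ι → ℕ) (v : ι → Fin d → ℤ) :
    intToReal (∑ i ∈ s, n i • v i) = ∑ i ∈ s, n i • intToReal (v i) := by
  change intToRealHom _ = ∑ i ∈ s, n i • intToRealHom (v i)
  simp only [map_sum, map_nsmul]

theorem norm_intToReal (u : Fin d → ℤ) : ‖intToReal u‖ = ‖u‖ := by
  simp only [intToReal, Pi.norm_def]
  congr 2

theorem one_le_norm_of_ne_zero {u : Fin d → ℤ} (hu : u ≠ 0) : 1 ≤ ‖u‖ := by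
  obtain ⟨i, hi⟩ := Function.ne_iff.mp hu
  calc (1 : ℝ) ≤ |(u i : ℝ)| := by exact_mod_cast Int.one_le_abs hi
    _ = ‖u i‖ := (Int.norm_eq_abs _).symm
    _ ≤ ‖u‖ := norm_le_pi_norm u i

def latticePoints (C : PointedCone ℝ (Fin d → ℝ)) : AddSubmonoid (Fin d → ℤ) :=
  C.toAddSubmonoid.comap intToRealHom

theorem mem_latticePoints {C : PointedCone ℝ (Fin d → ℝ)} {u : Fin d → ℤ} :
    u ∈ latticePoints C ↔ intToReal u ∈ C :=
  Iff.rfl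

variable {s : Finset (Fin d → ℤ)}

/-- Rounding `x` down to a lattice point `p` of the cone reduces the claim to the finitely many
lattice points `v - p` of a bounded region. -/
theorem exists_pos_le_dist_conicHull (s : Finset (Fin d → ℤ)) :
    ∃ δ > 0, ∀ v : Fin d → ℤ, v ∉ latticePoints (conicHull s intToReal) →
      ∀ x ∈ conicHull s intToReal, δ ≤ dist (intToReal v) x := by
  set C := conicHull s intToReal
  set M := ∑ v ∈ s, ‖intToReal v‖
  set Q := {q : Fin d → ℤ | ‖q‖ ≤ M + 1 ∧ q ∉ latticePoints C}
  have hQ : Q.Finite :=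
    (isCompact_closedBall (0 : Fin d → ℤ) (M + 1)).finite_of_discrete.subset
      fun q hq => mem_closedBall_zero_iff.mpr hq.1
  have hpos : ∀ q ∈ Q, 0 < infDist (intToReal q) C := fun q hq =>
    (isClosed_conicHull.notMem_iff_infDist_pos ⟨0, C.zero_mem⟩).mp hq.2
  have hsmall : ∀ᶠ δ in 𝓝[>] (0 : ℝ),
      0 < δ ∧ δ ≤ 1 ∧ ∀ q ∈ Q, δ ≤ infDist (intToReal q) C := by
    refine eventually_mem_nhdsWithin.and (Eventually.filter_mono nhdsWithin_le_nhds ?_)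
    exact (eventually_le_nhds one_pos).and
      (hQ.eventually_all.mpr fun q hq => eventually_le_nhds (hpos q hq))
  obtain ⟨δ, hδ0, hδ1, hδQ⟩ := hsmall.exists
  refine ⟨δ, hδ0, fun v hv x hx => ?_⟩
  obtain ⟨n, hr, hrM⟩ := exists_sub_sum_nsmul_mem_conicHull hx
  set p := ∑ v ∈ s, n v • v
  have hp : intToReal p ∈ C := by
    rw [intToReal_sum_nsmul]
    exact Submodule.sum_mem _ fun i hi => C.toAddSubmonoid.nsmul_mem (apply_mem_conicHull hi) _
  rw [← intToReal_sum_nsmul] at hr hrM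
  have hq : v - p ∉ latticePoints C := fun h => hv (by simpa using add_mem h hp)
  have hdist : dist (intToReal v) x = ‖intToReal (v - p) - (x - intToReal p)‖ := by
    rw [dist_eq_norm, intToReal_sub]; congr 1; abel
  by_cases hqM : ‖v - p‖ ≤ M + 1
  · calc δ ≤ infDist (intToReal (v - p)) C := hδQ _ ⟨hqM, hq⟩
      _ ≤ dist (intToReal (v - p)) (x - intToReal p) := infDist_le_dist_of_mem hr
      _ = dist (intToReal v) x := by rw [hdist, dist_eq_norm]
  · rw [hdist]
    have := norm_sub_norm_le (intToReal (v - p)) (x - intToReal p)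
    rw [norm_intToReal] at this
    linarith

end Lattice

section RationalCone

variable {d : ℕ} {s : Finset (Fin d → ℤ)} {ι : Type*}

local notation "σ" => conicHull s intToReal
local notation "Λ" => latticePoints (conicHull s intToReal)

theorem natCast_le_of_mem_nsmul {C : PointedCone ℝ (Fin d → ℝ)} {f : (Fin d → ℝ) →L[ℝ] ℝ}
    (hf : ∀ x ∈ C, ‖x‖ ≤ f x) {t : ℕ} {u : Fin d → ℤ}
    (hu : u ∈ t • ((latticePoints C : Set (Fin d → ℤ)) \ {0})) : (t : ℝ) ≤ f (intToReal u) := by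
  induction t generalizing u with
  | zero =>
    obtain rfl : u = 0 := by simpa using hu
    simp [intToReal_zero]
  | succ t ih =>
    rw [succ_nsmul] at hu
    obtain ⟨a, ha, b, ⟨hb, hb0⟩, rfl⟩ := hu
    have hb1 : 1 ≤ f (intToReal b) :=
      (one_le_norm_of_ne_zero hb0).trans ((norm_intToReal b).symm.trans_le (hf _ hb))
    rw [intToReal_add, map_add]
    push_cast
    linarith [ih ha]

theorem sum_nsmul_mem_nsmul (hs : ∀ v ∈ s, v ≠ 0) (n : (Fin d → ℤ) → ℕ) :
    ∑ v ∈ s, n v • v ∈ (∑ v ∈ s, n v) • ((Λ : Set (Fin d → ℤ)) \ {0}) := by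
  rw [← Finset.sum_nsmul_assoc]
  exact Set.finsetSum_mem_finsetSum _ _ _ fun v hv =>
    Set.nsmul_mem_nsmul ⟨apply_mem_conicHull hv, hs v hv⟩

/-- A point `w + x` far out in `w + σ` lies above `w + u` with `u ∈ t • (Λ \ {0})`: round `x` down
to a sum of at least `t` generators. -/
theorem isBounded_vadd_diff_iUnion (hs : ∀ v ∈ s, v ≠ 0) (m : ι → Fin d → ℤ) (w : Fin d → ℤ)
    {t : ℕ} (hcov : ∀ u ∈ t • ((Λ : Set (Fin d → ℤ)) \ {0}), ∃ i, w + u - m i ∈ Λ) :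
    Bornology.IsBounded ((intToReal w +ᵥ (σ : Set (Fin d → ℝ))) \
      ⋃ i, intToReal (m i) +ᵥ (σ : Set (Fin d → ℝ))) := by
  set M := ∑ v ∈ s, ‖intToReal v‖
  refine (isBounded_closedBall (x := intToReal w) (r := (t + 1) * M)).subset ?_
  rintro _ ⟨hy, hW⟩
  obtain ⟨x, hx, rfl⟩ := Set.mem_vadd_set.mp hy
  obtain ⟨n, hr, hrM⟩ := exists_sub_sum_nsmul_mem_conicHull hx
  have hp := sum_nsmul_mem_nsmul hs n
  set p := ∑ v ∈ s, n v • v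
  rw [← intToReal_sum_nsmul] at hr hrM
  have hN : ∑ v ∈ s, n v < t := by
    by_contra! htN
    obtain ⟨u, hu, l, hl, hpul⟩ : p ∈ t • ((Λ : Set (Fin d → ℤ)) \ {0}) + Λ := by
      rw [← Nat.add_sub_cancel' htN, add_nsmul] at hp
      exact Set.add_subset_add_left (AddSubmonoid.nsmul_subset Set.sdiff_subset) hp
    obtain ⟨i, hi⟩ := hcov u hu
    refine hW (Set.mem_iUnion.mpr ⟨i, intToReal (w + u - m i) + intToReal l + (x - intToReal p),
      add_mem (add_mem hi hl) hr, ?_⟩)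
    rw [← hpul]
    simp only [vadd_eq_add, intToReal_add, intToReal_sub]
    abel
  have hpM : ‖intToReal p‖ ≤ (∑ v ∈ s, n v) * M := by
    rw [intToReal_sum_nsmul, Nat.cast_sum, Finset.sum_mul]
    refine (norm_sum_le _ _).trans (Finset.sum_le_sum fun v hv => ?_)
    exact norm_nsmul_le.trans (mul_le_mul_of_nonneg_left
      (Finset.single_le_sum (fun v _ => norm_nonneg (intToReal v)) hv) (Nat.cast_nonneg _))
  have hNt : ((∑ v ∈ s, n v : ℕ) : ℝ) ≤ t := by exact_mod_cast hN.le
  have hM : 0 ≤ M := Finset.sum_nonneg fun v _ => norm_nonneg _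
  rw [mem_closedBall, dist_eq_norm, vadd_eq_add, add_sub_cancel_left]
  calc ‖x‖ = ‖intToReal p + (x - intToReal p)‖ := by rw [add_sub_cancel]
    _ ≤ ‖intToReal p‖ + ‖x - intToReal p‖ := norm_add_le _ _
    _ ≤ (t + 1) * M := by nlinarith

/-- By the uniform gap `δ`, the translate of `σ ∩ B(0, δ)` by a lattice point `w + u ∉ W` misses
`W`, and such `w + u` are arbitrarily long. -/
theorem volume_vadd_diff_iUnion_eq_top (hspan : Submodule.span ℝ (σ : Set (Fin d → ℝ)) = ⊤)
    (hsal : (σ : ConvexCone ℝ (Fin d → ℝ)).Salient) (hs : ∀ v ∈ s, v ≠ 0)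
    (m : ι → Fin d → ℤ) (w : Fin d → ℤ)
    (hbad : ∀ t : ℕ, ∃ u ∈ t • ((Λ : Set (Fin d → ℤ)) \ {0}), ∀ i, w + u - m i ∉ Λ) :
    volume ((intToReal w +ᵥ (σ : Set (Fin d → ℝ))) \
      ⋃ i, intToReal (m i) +ᵥ (σ : Set (Fin d → ℝ))) = ⊤ := by
  obtain ⟨f, hf⟩ := exists_norm_le_of_salient (fun v hv h0 => hs v hv
    (norm_eq_zero.mp (by rw [← norm_intToReal, h0, norm_zero]))) hsal
  obtain ⟨δ, hδ, hgap⟩ := exists_pos_le_dist_conicHull s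
  refine measure_eq_top_of_forall_vadd_subset volume
    (isClosed_conicHull.measurableSet.inter measurableSet_ball)
    (measure_cone_inter_ball_pos volume σ hspan hδ).ne' Set.inter_subset_right fun R => ?_
  obtain ⟨t, ht⟩ := exists_nat_gt (‖f‖ * (R + ‖w‖))
  obtain ⟨u, hu, hbad⟩ := hbad t
  have huC : u ∈ Λ := AddSubmonoid.nsmul_subset Set.sdiff_subset hu
  have hRu : R + ‖w‖ < ‖u‖ := by
    refine lt_of_mul_lt_mul_left ?_ (norm_nonneg f)
    calc ‖f‖ * (R + ‖w‖) < t := ht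
      _ ≤ f (intToReal u) := natCast_le_of_mem_nsmul hf hu
      _ ≤ ‖f‖ * ‖u‖ := (le_abs_self _).trans ((f.le_opNorm _).trans_eq (by rw [norm_intToReal]))
  refine ⟨intToReal (w + u), ?_, ?_⟩
  · rw [norm_intToReal]
    have := norm_sub_le (w + u) w
    rw [add_sub_cancel_left] at this
    linarith
  · rintro _ ⟨r, ⟨hrC, hrδ⟩, rfl⟩
    refine ⟨⟨intToReal u + r, add_mem huC hrC, by simp [intToReal_add, add_assoc]⟩, fun hW => ?_⟩
    obtain ⟨i, hi⟩ := Set.mem_iUnion.mp hW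
    obtain ⟨c, hc, hci⟩ := Set.mem_vadd_set.mp hi
    have hc' : c = intToReal (w + u) + r - intToReal (m i) := by
      simp only [vadd_eq_add] at hci
      rw [← hci]
      abel
    have hdist : dist (intToReal (w + u - m i)) c = ‖r‖ := by
      rw [dist_eq_norm, intToReal_sub, hc', ← norm_neg]
      congr 1
      abel
    have := hgap _ (hbad i) c hc
    rw [mem_ball_zero_iff] at hrδ
    linarith

theorem exists_nsmul_cover_iff_volume_ne_top (hspan : Submodule.span ℝ (σ : Set (Fin d → ℝ)) = ⊤)
    (hsal : (σ : ConvexCone ℝ (Fin d → ℝ)).Salient) (hs : ∀ v ∈ s, v ≠ 0)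
    (m : ι → Fin d → ℤ) (w : Fin d → ℤ) :
    (∃ t : ℕ, ∀ u ∈ t • ((Λ : Set (Fin d → ℤ)) \ {0}), ∃ i, w + u - m i ∈ Λ) ↔
      volume ((intToReal w +ᵥ (σ : Set (Fin d → ℝ))) \
        ⋃ i, intToReal (m i) +ᵥ (σ : Set (Fin d → ℝ))) ≠ ⊤ := by
  refine ⟨fun ⟨t, hcov⟩ => (isBounded_vadd_diff_iUnion hs m w hcov).measure_lt_top.ne, ?_⟩
  contrapose!
  exact volume_vadd_diff_iUnion_eq_top hspan hsal hs m w

end RationalCone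

section Saturation

variable {S : Type*} [CommRing S]

theorem colon_coe_pow (I J : Ideal S) (t : ℕ) :
    I.colon ((J : Set S) ^ t) = I.colon ↑(J ^ t) := by
  rw [Submodule.pow_eq_span_pow_set, Submodule.colon_span]

theorem mem_saturation_iff {I J : Ideal S} {x : S} :
    x ∈ saturation I J ↔ ∃ t : ℕ, x ∈ I.colon ↑(J ^ t) := by
  have hmono : Monotone fun t : ℕ => I.colon ((J : Set S) ^ t) := fun t t' h => by
    simp only [colon_coe_pow]
    exact Submodule.colon_mono le_rfl (Ideal.pow_le_pow_right h)
  rw [saturation, Submodule.mem_iSup_of_directed _ hmono.directed_le]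
  simp only [colon_coe_pow]

end Saturation

section MonomialIdeal

open AddMonoidAlgebra

variable {k G : Type*} [CommRing k] [AddCommGroup G] {Λ : AddSubmonoid G}
  {R : Subalgebra k (AddMonoidAlgebra k G)}

theorem single_one_mem (hR : R = Algebra.adjoin k {x | ∃ u ∈ Λ, x = single u 1}) {u : G}
    (hu : u ∈ Λ) : single u (1 : k) ∈ R :=
  hR ▸ Algebra.subset_adjoin ⟨u, hu, rfl⟩

theorem coeff_support_subset (hR : R = Algebra.adjoin k {x | ∃ u ∈ Λ, x = single u 1})
    {y : AddMonoidAlgebra k G} (hy : y ∈ R) : (y.coeff.support : Set G) ⊆ Λ := by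
  classical
  rw [hR] at hy
  induction hy using Algebra.adjoin_induction with
  | mem x hx =>
    obtain ⟨u, hu, rfl⟩ := hx
    intro a ha
    obtain rfl := Finset.mem_singleton.mp (Finsupp.support_single_subset ha)
    exact hu
  | algebraMap r =>
    intro a ha
    rw [coe_algebraMap] at ha
    obtain rfl := Finset.mem_singleton.mp (Finsupp.support_single_subset ha)
    exact Λ.zero_mem
  | add x y _ _ hx hy =>
    intro a ha
    rcases Finset.mem_union.mp (Finsupp.support_add ha) with h | h
    exacts [hx h, hy h]
  | mul x y _ _ hx hy =>
    intro a ha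
    obtain ⟨b, hb, c, hc, rfl⟩ := Finset.mem_add.mp (support_coeff_mul_subset x y ha)
    exact Λ.add_mem (hx hb) (hy hc)

theorem mem_span_single_iff [Nontrivial k]
    (hR : R = Algebra.adjoin k {x | ∃ u ∈ Λ, x = single u 1}) {ι : Type*} (m : ι → G)
    (hm : ∀ i, m i ∈ Λ) {y : R} {v : G} (hy : (y : AddMonoidAlgebra k G) = single v 1) :
    y ∈ Ideal.span {x : R | ∃ i, (x : AddMonoidAlgebra k G) = single (m i) 1} ↔
      ∃ i, v - m i ∈ Λ := by
  constructor
  · classical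
    intro hmem
    suffices ∀ z ∈ Ideal.span {x : R | ∃ i, (x : AddMonoidAlgebra k G) = single (m i) 1},
        ∀ a ∈ (z : AddMonoidAlgebra k G).coeff.support, ∃ i, a - m i ∈ Λ from
      this y hmem v (by simp [hy])
    intro z hz
    induction hz using Submodule.span_induction with
    | mem x hx =>
      obtain ⟨i, hi⟩ := hx
      intro a ha
      rw [hi] at ha
      obtain rfl := Finset.mem_singleton.mp (Finsupp.support_single_subset ha)
      exact ⟨i, by simp⟩
    | zero => simp
    | add x z _ _ hx hz =>
      intro a ha
      rcases Finset.mem_union.mp (Finsupp.support_add ha) with h | h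
      exacts [hx a h, hz a h]
    | smul r x _ hx =>
      intro a ha
      rw [smul_eq_mul, Subalgebra.coe_mul] at ha
      obtain ⟨b, hb, c, hc, rfl⟩ := Finset.mem_add.mp (support_coeff_mul_subset _ _ ha)
      obtain ⟨i, hi⟩ := hx c hc
      exact ⟨i, by simpa [add_sub_assoc] using Λ.add_mem (coeff_support_subset hR r.2 hb) hi⟩
  · rintro ⟨i, hi⟩
    have hfac : y = ⟨single (v - m i) 1, single_one_mem hR hi⟩ *
        ⟨single (m i) 1, single_one_mem hR (hm i)⟩ :=
      Subtype.ext (by simp [hy, single_mul_single])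
    rw [hfac]
    exact Ideal.mul_mem_left _ _ (Ideal.subset_span ⟨i, rfl⟩)

theorem mem_monomials_pow_iff (hR : R = Algebra.adjoin k {x | ∃ u ∈ Λ, x = single u 1})
    {L : Set G} (hL : L ⊆ Λ) {t : ℕ} {y : R} :
    y ∈ {x : R | ∃ u ∈ L, (x : AddMonoidAlgebra k G) = single u 1} ^ t ↔
      ∃ u ∈ t • L, (y : AddMonoidAlgebra k G) = single u 1 := by
  induction t generalizing y with
  | zero =>
    simp only [pow_zero, zero_nsmul, Set.mem_one, Set.mem_zero, exists_eq_left, ← one_def]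
    exact ⟨fun h => h ▸ rfl, fun h => Subtype.ext h⟩
  | succ t ih =>
    rw [pow_succ, succ_nsmul, Set.mem_mul]
    constructor
    · rintro ⟨a, ha, b, ⟨v, hv, hb⟩, rfl⟩
      obtain ⟨u, hu, ha⟩ := ih.mp ha
      exact ⟨u + v, Set.add_mem_add hu hv, by simp [ha, hb, single_mul_single]⟩
    · rintro ⟨_, ⟨u, hu, v, hv, rfl⟩, hy⟩
      refine ⟨⟨single u 1, single_one_mem hR (AddSubmonoid.nsmul_subset hL hu)⟩,
        ih.mpr ⟨u, hu, rfl⟩, ⟨single v 1, single_one_mem hR (hL hv)⟩, ⟨v, hv, rfl⟩,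
        Subtype.ext ?_⟩
      simp [hy, single_mul_single]

theorem single_mem_saturation_iff [Nontrivial k]
    (hR : R = Algebra.adjoin k {x | ∃ u ∈ Λ, x = single u 1}) {ι : Type*} (m : ι → G)
    (hm : ∀ i, m i ∈ Λ) {L : Set G} (hL : L ⊆ Λ) {y : R} {w : G}
    (hy : (y : AddMonoidAlgebra k G) = single w 1) :
    y ∈ saturation (Ideal.span {x : R | ∃ i, (x : AddMonoidAlgebra k G) = single (m i) 1})
        (Ideal.span {x : R | ∃ u ∈ L, (x : AddMonoidAlgebra k G) = single u 1}) ↔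
      ∃ t : ℕ, ∀ u ∈ t • L, ∃ i, w + u - m i ∈ Λ := by
  rw [mem_saturation_iff]
  refine exists_congr fun t => ?_
  rw [Ideal.span, Submodule.span_pow, Submodule.colon_span, Submodule.mem_colon]
  constructor
  · intro h u hu
    have hmem := h ⟨single u 1, single_one_mem hR (AddSubmonoid.nsmul_subset hL hu)⟩
      ((mem_monomials_pow_iff hR hL).mpr ⟨u, hu, rfl⟩)
    exact (mem_span_single_iff hR m hm (by simp [hy, single_mul_single])).mp hmem
  · intro h z hz
    obtain ⟨u, hu, hzu⟩ := (mem_monomials_pow_iff hR hL).mp hz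
    exact (mem_span_single_iff hR m hm (v := w + u) (by simp [hy, hzu, single_mul_single])).mpr
      (h u hu)

end MonomialIdeal

theorem stmt5 (k : Type u) [Field k] (d : ℕ) (σ : Set (Fin d → ℝ))
    (hσ : IsStronglyConvexRationalPolyhedralCone σ)
    (hspan : Submodule.span ℝ σ = ⊤)
    (s : ℕ) (m : Fin s → (Fin d → ℤ)) (hm : ∀ i, intToReal (m i) ∈ σ)
    -- the monoid algebra `R = k[σ ∩ ℤ^d]`, its maximal monomial ideal `J`, and
    -- the monomial ideal `I = (X^{m_1}, …, X^{m_s})`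
    (R : Subalgebra k (AddMonoidAlgebra k (Fin d → ℤ)))
    (hR : R = Algebra.adjoin k
      {x | ∃ u : Fin d → ℤ, intToReal u ∈ σ ∧ x = AddMonoidAlgebra.single u (1 : k)})
    (J : Ideal ↥R)
    (hJ : J = Ideal.span {x : ↥R | ∃ u : Fin d → ℤ, u ≠ 0 ∧ intToReal u ∈ σ ∧
      (x : AddMonoidAlgebra k (Fin d → ℤ)) = AddMonoidAlgebra.single u (1 : k)})
    (I : Ideal ↥R)
    (hI : I = Ideal.span {x : ↥R | ∃ i : Fin s,
      (x : AddMonoidAlgebra k (Fin d → ℤ)) = AddMonoidAlgebra.single (m i) (1 : k)}) :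
    ∀ (w : Fin d → ℤ), intToReal w ∈ σ →
      ∀ x : ↥R, (x : AddMonoidAlgebra k (Fin d → ℤ)) = AddMonoidAlgebra.single w (1 : k) →
        (x ∈ saturation I J ↔
          volume ((intToReal w +ᵥ σ) \ ⋃ i : Fin s, (intToReal (m i) +ᵥ σ)) ≠ ⊤) := by
  obtain ⟨⟨gens, hgens⟩, hsal⟩ := hσ
  have hσC : σ = conicHull (gens.filter fun v => intToReal v ≠ 0) intToReal := by
    rw [conicHull_filter_ne_zero]; exact hgens
  have hs : ∀ v ∈ gens.filter fun v => intToReal v ≠ 0, v ≠ 0 := fun v hv h0 =>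
    (Finset.mem_filter.mp hv).2 (h0 ▸ intToReal_zero)
  subst hσC hJ hI
  set C := conicHull (gens.filter fun v => intToReal v ≠ 0) intToReal
  intro w _ x hx
  have hJset : {x : R | ∃ u : Fin d → ℤ, u ≠ 0 ∧ intToReal u ∈ (C : Set (Fin d → ℝ)) ∧
      (x : AddMonoidAlgebra k (Fin d → ℤ)) = AddMonoidAlgebra.single u (1 : k)} =
      {x : R | ∃ u ∈ (latticePoints C : Set (Fin d → ℤ)) \ {0},
        (x : AddMonoidAlgebra k (Fin d → ℤ)) = AddMonoidAlgebra.single u (1 : k)} := by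
    ext x
    simp only [Set.mem_ofPred_eq, Set.mem_sdiff, SetLike.mem_coe, mem_latticePoints,
      Set.mem_singleton_iff]
    exact exists_congr fun u => by tauto
  rw [hJset, single_mem_saturation_iff (Λ := latticePoints C) hR m hm Set.sdiff_subset hx]
  exact exists_nsmul_cover_iff_volume_ne_top hspan
    ((PointedCone.salient_iff_inter_neg_eq_singleton _).mpr hsal) hs m w
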